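/- arXiv:2309.14513 — 3 statements merged into one kernel-verified Lean document; each statement's English description precedes it below -/
import Mathlib

section
/- Let F=(V,E∪A) be a mixed graph and S a multiset of V. There exists a packing of spanning mixed s-arborescences in F, one rooted at each element s of S (counted with multiplicity), if and only if e_{E∪A}(𝒫) ≥ |S|·|𝒫| − |S_{∪𝒫}| for every subpartition 𝒫 of V. (Frank's theorem on mixed graphs) -/
/- Common definitions for formalizing packing-of-arborescences theorems.

Conventions:
* A digraph on a finite vertex type `V` is given by a finite multiset of arcs
  `A : Multiset (V × V)`, an arc `(u, v)` having tail `u` and head `v`.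
* An undirected (multi)graph is given by a multiset of edges `E : Multiset (V × V)`,
  an edge being recorded as an (arbitrarily ordered) pair of its endpoints.
* A multiset `S` of vertices (e.g. of roots) is given by a finite index type `S`
  together with a placement map `π : S → V`; the multiplicity of a vertex `v` is
  the size of the fiber over `v`.
* A dypergraph is given by a multiset `𝒜 : Multiset (Finset V × V)` of dyperedges
  `(Z, z)` with tail set `Z` and head `z`; a hypergraph by a multiset
  `ℰ : Multiset (Finset V)` of hyperedges. -/

attribute [local instance] Classical.propDecidable

noncomputable section

namespace ArborPaper

variable {V : Type*} [Fintype V] [DecidableEq V]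

/-- An arc `a = (u, v)` (tail `u`, head `v`) enters `X` if its head is in `X`
and its tail is outside. -/
def arcEnters (a : V × V) (X : Finset V) : Prop := a.2 ∈ X ∧ a.1 ∉ X

/-- An undirected edge (given by a pair of endpoints) enters `X` if exactly one of
its endpoints is in `X`. -/
def edgeEnters (e : V × V) (X : Finset V) : Prop :=
  (e.1 ∈ X ∧ e.2 ∉ X) ∨ (e.2 ∈ X ∧ e.1 ∉ X)

/-- The in-degree `d⁻_A(X)` of a vertex set `X`. -/
def inDeg (A : Multiset (V × V)) (X : Finset V) : ℕ :=
  (A.filter fun a => arcEnters a X).card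

/-- The in-degree of a single vertex. -/
def inDegV (A : Multiset (V × V)) (v : V) : ℕ :=
  (A.filter fun a => a.2 = v).card

/-- Reachability by a directed path using the arcs of `A`. -/
def Reaches (A : Multiset (V × V)) (u v : V) : Prop :=
  Relation.ReflTransGen (fun x y => (x, y) ∈ A) u v

/-- `P_D^X` : the set of vertices from which some vertex of `X` is reachable. -/
def PD (A : Multiset (V × V)) (X : Finset V) : Finset V :=
  Finset.univ.filter fun u => ∃ v ∈ X, Reaches A u v

/-- `Q_D^X` : the set of vertices reachable from some vertex of `X`. -/
def QD (A : Multiset (V × V)) (X : Finset V) : Finset V :=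
  Finset.univ.filter fun v => ∃ u ∈ X, Reaches A u v

/-- `C` is a strongly connected component of the digraph `(V, A)`. -/
def IsSCCD (A : Multiset (V × V)) (C : Finset V) : Prop :=
  ∃ v : V, C = Finset.univ.filter fun u => Reaches A u v ∧ Reaches A v u

/-- `B` is an `s`-arborescence with vertex set `U` : all arcs lie inside `U`,
every vertex of `U` other than `s` has in-degree exactly `1`, the root has
in-degree `0`, and every vertex of `U` is reachable from `s`
(equivalently: no circuit and all in-degrees of non-root vertices equal `1`). -/
def IsArborOn (B : Multiset (V × V)) (U : Finset V) (s : V) : Prop :=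
  s ∈ U ∧ (∀ a ∈ B, a.1 ∈ U ∧ a.2 ∈ U) ∧
  (∀ v ∈ U, v ≠ s → inDegV B v = 1) ∧ inDegV B s = 0 ∧
  ∀ v ∈ U, Reaches B s v

/-- `B` is a spanning `s`-arborescence (vertex set all of `V`). -/
def IsSpanningArbor (B : Multiset (V × V)) (s : V) : Prop :=
  IsArborOn B Finset.univ s

/-- One step along a mixed graph: an arc of `A`, or an edge of `E` in either direction. -/
def MStep (E A : Multiset (V × V)) (u v : V) : Prop :=
  (u, v) ∈ A ∨ (u, v) ∈ E ∨ (v, u) ∈ E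

/-- Reachability by a mixed path in the mixed graph `(V, E ∪ A)`. -/
def MReaches (E A : Multiset (V × V)) (u v : V) : Prop :=
  Relation.ReflTransGen (MStep E A) u v

/-- `P_F^X` for a mixed graph `F = (V, E ∪ A)`. -/
def PF (E A : Multiset (V × V)) (X : Finset V) : Finset V :=
  Finset.univ.filter fun u => ∃ v ∈ X, MReaches E A u v

/-- `Q_F^X` for a mixed graph `F = (V, E ∪ A)`. -/
def QF (E A : Multiset (V × V)) (X : Finset V) : Finset V :=
  Finset.univ.filter fun v => ∃ u ∈ X, MReaches E A u v

/-- `C` is a strongly connected component of the mixed graph `(V, E ∪ A)`. -/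
def IsSCC (E A : Multiset (V × V)) (C : Finset V) : Prop :=
  ∃ v : V, C = Finset.univ.filter fun u => MReaches E A u v ∧ MReaches E A v u

/-- `e_{E∪A}(𝒫)` : the number of edges of `E` and arcs of `A` entering at least one
member of the family `P`. -/
def eMixed (E A : Multiset (V × V)) (P : Finset (Finset V)) : ℕ :=
  (E.filter fun e => ∃ X ∈ P, edgeEnters e X).card +
  (A.filter fun a => ∃ X ∈ P, arcEnters a X).card

/-- A subpartition of `V` : a set of pairwise disjoint nonempty subsets. -/
def IsSubpartition (P : Finset (Finset V)) : Prop :=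
  (∀ X ∈ P, X.Nonempty) ∧ ∀ X ∈ P, ∀ Y ∈ P, X ≠ Y → Disjoint X Y

/-- `Eo` is an orientation of the multiset `E` of undirected edges: each edge is
kept or swapped. -/
def IsOrientationOf (E Eo : Multiset (V × V)) : Prop :=
  Multiset.Rel (fun e a => a = e ∨ a = Prod.swap e) E Eo

/-- The rank function of a matroid on a finite ground type `S`. -/
structure RankFn (S : Type*) [Fintype S] [DecidableEq S] where
  r : Finset S → ℕ
  rank_le_card : ∀ X : Finset S, r X ≤ X.card
  mono : ∀ ⦃X Y : Finset S⦄, X ⊆ Y → r X ≤ r Y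
  submodular : ∀ X Y : Finset S, r (X ∪ Y) + r (X ∩ Y) ≤ r X + r Y

/-- `B` is a basis of `T` in the matroid with rank function `M` : an independent
subset of `T` of full rank in `T`. -/
def RankFn.IsBasisOf {S : Type*} [Fintype S] [DecidableEq S] (M : RankFn S)
    (B T : Finset S) : Prop :=
  B ⊆ T ∧ M.r B = B.card ∧ M.r B = M.r T

/-- A dyperedge `a = (Z, z)` enters `X` if its head `z` is in `X` and some tail
vertex lies outside `X`. -/
def dypEnters (a : Finset V × V) (X : Finset V) : Prop :=
  a.2 ∈ X ∧ (a.1 \ X).Nonempty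

/-- The in-degree `d⁻_𝒜(X)` in a dypergraph. -/
def dypInDeg (𝒜 : Multiset (Finset V × V)) (X : Finset V) : ℕ :=
  (𝒜.filter fun a => dypEnters a X).card

/-- A hyperedge `e` enters `X` if it meets both `X` and its complement. -/
def hypEnters (e X : Finset V) : Prop := (e ∩ X).Nonempty ∧ (e \ X).Nonempty

/-- `e_{ℰ∪𝒜}(𝒫)` for a mixed hypergraph: the number of hyperedges of `ℰ` and
dyperedges of `𝒜` entering at least one member of `P`. -/
def eMH (ℰ : Multiset (Finset V)) (𝒜 : Multiset (Finset V × V))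
    (P : Finset (Finset V)) : ℕ :=
  (ℰ.filter fun e => ∃ X ∈ P, hypEnters e X).card +
  (𝒜.filter fun a => ∃ X ∈ P, dypEnters a X).card

/-- `B` is obtained from the multiset `𝒵` of dyperedges by trimming each
dyperedge `(Z, z)` to an arc `(y, z)` with `y ∈ Z`. -/
def Trims (𝒵 : Multiset (Finset V × V)) (B : Multiset (V × V)) : Prop :=
  Multiset.Rel (fun a b => b.2 = a.2 ∧ b.1 ∈ a.1) 𝒵 B

/-- `𝒟` is an orientation of the multiset `ℰ` of hyperedges: each hyperedge `X`
is replaced by a dyperedge `(X − x, x)` for some `x ∈ X`. -/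
def Orients (ℰ : Multiset (Finset V)) (𝒟 : Multiset (Finset V × V)) : Prop :=
  Multiset.Rel (fun e a => a.2 ∈ e ∧ a.1 = e.erase a.2) ℰ 𝒟

end ArborPaper

/-! Necessity is counting: a spanning arborescence rooted at `s` enters every block of a
subpartition `𝒫` that avoids `s`, through distinct arcs, so it uses at least
`|𝒫| - [s ∈ ∪𝒫]` of the edges and arcs entering `𝒫`.

For sufficiency the edges are oriented one at a time so that the bound survives (Frank). If
neither orientation of an edge `e` did, there would be tight subpartitions `𝒫₁`, `𝒫₂` blocking
the two orientations, with one end of `e` outside `∪𝒫₁` and the other outside `∪𝒫₂`. Their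
common coarsening `𝒬` (blocks that meet are merged) and common refinement `ℛ` (nonempty
pairwise intersections) satisfy `|𝒫₁| + |𝒫₂| ≤ |𝒬| + |ℛ|` and
`e(𝒬) + e(ℛ) ≤ e(𝒫₁) + e(𝒫₂)`, and `e` enters no block of `ℛ`; so the bounds at `𝒬` and `ℛ`
contradict the tightness of `𝒫₁` and `𝒫₂`. Once everything is oriented, the bound on
one-block subpartitions is Edmonds' cut condition `|S| ≤ d⁻(X) + |S_X|`, and Lovász's proof of
Edmonds' branching theorem grows the arborescences one at a time, always adding an arc that
enters no tight set. -/

namespace ArborPaper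

open Finset

section Counting

variable {α : Type*}

/- Indicators and counts are taken with classical decidability, so that they do not depend on
the decidability instances with which the graph-theoretic definitions were elaborated. -/
def ind (p : Prop) : ℕ := if p then 1 else 0

def cnt (p : α → Prop) (M : Multiset α) : ℕ := M.countP p

lemma ind_eq_one {p : Prop} (h : p) : ind p = 1 := if_pos h

lemma ind_eq_zero {p : Prop} (h : ¬p) : ind p = 0 := if_neg h

lemma ind_le_one (p : Prop) : ind p ≤ 1 := by unfold ind; split_ifs <;> omega

lemma ind_mono {p q : Prop} (h : p → q) : ind p ≤ ind q := by
  unfold ind; split_ifs <;> tauto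

lemma ind_add_ind_le {p q r s : Prop} (hand : p ∧ q → r ∧ s) (hor : p ∨ q → r ∨ s) :
    ind p + ind q ≤ ind r + ind s := by
  unfold ind; split_ifs <;> tauto

lemma cnt_eq_card_filter (p : α → Prop) [DecidablePred p] (M : Multiset α) :
    (M.filter p).card = cnt p M := by
  rw [cnt, Multiset.countP_eq_card_filter]
  congr

lemma cnt_eq_sum_map (p : α → Prop) (M : Multiset α) :
    cnt p M = (M.map fun a => ind (p a)).sum := by
  induction M using Multiset.induction with
  | empty => rfl
  | cons a M ih => rw [cnt, Multiset.countP_cons, ← cnt, ih]; simp [ind, add_comm]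

lemma cnt_zero (p : α → Prop) : cnt p 0 = 0 := rfl

lemma cnt_cons (p : α → Prop) (a : α) (M : Multiset α) :
    cnt p (a ::ₘ M) = cnt p M + ind (p a) :=
  Multiset.countP_cons _ _ _

lemma cnt_add (p : α → Prop) (M N : Multiset α) : cnt p (M + N) = cnt p M + cnt p N :=
  Multiset.countP_add _ _ _

lemma cnt_sum {σ : Type*} (p : α → Prop) (f : σ → Multiset α) (F : Finset σ) :
    cnt p (∑ s ∈ F, f s) = ∑ s ∈ F, cnt p (f s) :=
  map_sum (Multiset.countPAddMonoidHom p) f F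

lemma cnt_le_of_le (p : α → Prop) {M N : Multiset α} (h : M ≤ N) : cnt p M ≤ cnt p N :=
  Multiset.countP_le_of_le _ h

lemma one_le_cnt_iff {p : α → Prop} {M : Multiset α} : 1 ≤ cnt p M ↔ ∃ a ∈ M, p a :=
  Multiset.countP_pos

lemma cnt_eq_zero {p : α → Prop} {M : Multiset α} (h : ∀ a ∈ M, ¬p a) : cnt p M = 0 :=
  Multiset.countP_eq_zero.mpr h

lemma cnt_congr {p q : α → Prop} {M : Multiset α} (h : ∀ a ∈ M, p a ↔ q a) :
    cnt p M = cnt q M :=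
  Multiset.countP_congr rfl fun a ha => propext (h a ha)

lemma cnt_le_cnt_add_cnt {p q r : α → Prop} {M : Multiset α} (h : ∀ a ∈ M, p a → q a ∨ r a) :
    cnt p M ≤ cnt q M + cnt r M := by
  simp only [cnt_eq_sum_map, ← Multiset.sum_map_add]
  refine Multiset.sum_map_le_sum_map _ _ fun a ha => ?_
  have := h a ha
  unfold ind; split_ifs <;> tauto

lemma cnt_add_cnt_le {p₁ p₂ q₁ q₂ : α → Prop} {M : Multiset α}
    (h : ∀ a ∈ M, ind (p₁ a) + ind (p₂ a) ≤ ind (q₁ a) + ind (q₂ a)) :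
    cnt p₁ M + cnt p₂ M ≤ cnt q₁ M + cnt q₂ M := by
  simp only [cnt_eq_sum_map, ← Multiset.sum_map_add]
  exact Multiset.sum_map_le_sum_map _ _ h

lemma cnt_le_cnt_of_rel {β : Type*} {r : α → β → Prop} {M : Multiset α} {N : Multiset β}
    (hrel : Multiset.Rel r M N) {p : α → Prop} {q : β → Prop} (h : ∀ x y, r x y → q y → p x) :
    cnt q N ≤ cnt p M := by
  induction hrel with
  | zero => rfl
  | cons hxy _ ih =>
    rw [cnt_cons, cnt_cons]
    exact add_le_add ih (ind_mono (h _ _ hxy))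

end Counting

section Degrees

variable {V : Type*}

lemma inDeg_eq_cnt (A : Multiset (V × V)) (X : Finset V) :
    inDeg A X = cnt (fun a => arcEnters a X) A :=
  cnt_eq_card_filter _ _

lemma inDeg_univ [Fintype V] (A : Multiset (V × V)) : inDeg A univ = 0 := by
  rw [inDeg_eq_cnt]
  exact cnt_eq_zero fun a _ h => h.2 (mem_univ _)

lemma inDeg_union_add_inter_le [DecidableEq V] (A : Multiset (V × V)) (X Y : Finset V) :
    inDeg A (X ∪ Y) + inDeg A (X ∩ Y) ≤ inDeg A X + inDeg A Y := by
  simp only [inDeg_eq_cnt]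
  refine cnt_add_cnt_le fun a _ => ind_add_ind_le ?_ ?_ <;>
    simp only [arcEnters, mem_union, mem_inter] <;> tauto

lemma inDegV_eq_cnt [DecidableEq V] (A : Multiset (V × V)) (v : V) :
    inDegV A v = cnt (fun a => a.2 = v) A :=
  cnt_eq_card_filter _ _

def rootCount {ι : Type*} [Fintype ι] (ρ : ι → V) (X : Finset V) : ℕ :=
  (univ.filter fun i => ρ i ∈ X).card

variable {ι : Type*} [Fintype ι]

lemma rootCount_eq_sum (ρ : ι → V) (X : Finset V) :
    rootCount ρ X = ∑ i, ind (ρ i ∈ X) := by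
  rw [rootCount, card_filter]
  exact sum_congr rfl fun i _ => by unfold ind; congr

lemma rootCount_univ [Fintype V] (ρ : ι → V) : rootCount ρ univ = Fintype.card ι := by
  simp [rootCount_eq_sum, ind]

lemma rootCount_mono (ρ : ι → V) {X Y : Finset V} (h : X ⊆ Y) :
    rootCount ρ X ≤ rootCount ρ Y := by
  simp only [rootCount_eq_sum]
  exact sum_le_sum fun i _ => ind_mono fun hi => h hi

lemma rootCount_union_add_inter [DecidableEq V] (ρ : ι → V) (X Y : Finset V) :
    rootCount ρ (X ∪ Y) + rootCount ρ (X ∩ Y) = rootCount ρ X + rootCount ρ Y := by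
  simp only [rootCount_eq_sum, ← sum_add_distrib]
  refine sum_congr rfl fun i _ => ?_
  by_cases h₁ : ρ i ∈ X <;> by_cases h₂ : ρ i ∈ Y <;> simp [ind, h₁, h₂]

lemma rootCount_fin_succ {m : ℕ} (ρ : Fin (m + 1) → V) (X : Finset V) :
    rootCount ρ X = ind (ρ 0 ∈ X) + rootCount (ρ ∘ Fin.succ) X := by
  simp only [rootCount_eq_sum, Fin.sum_univ_succ, Function.comp_apply]

lemma rootCount_comp_equiv {κ : Type*} [Fintype κ] (ρ : ι → V) (e : κ ≃ ι) (X : Finset V) :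
    rootCount (ρ ∘ e) X = rootCount ρ X := by
  simp only [rootCount_eq_sum, Function.comp_apply]
  exact e.sum_comp fun i => ind (ρ i ∈ X)

lemma exists_arc_of_inDeg_lt {D : Multiset (V × V)} {Y Z : Finset V} (hYZ : Y ⊆ Z)
    (h : inDeg D Z < inDeg D Y) : ∃ a ∈ D, a.1 ∈ Z ∧ a.1 ∉ Y ∧ a.2 ∈ Y := by
  have hsplit : inDeg D Y ≤ inDeg D Z + cnt (fun a => a.1 ∈ Z ∧ a.1 ∉ Y ∧ a.2 ∈ Y) D := by
    rw [inDeg_eq_cnt, inDeg_eq_cnt]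
    refine cnt_le_cnt_add_cnt fun a _ ⟨h₂, h₁⟩ => ?_
    by_cases hZ : a.1 ∈ Z
    · exact Or.inr ⟨hZ, h₁, h₂⟩
    · exact Or.inl ⟨hYZ h₂, hZ⟩
  exact one_le_cnt_iff.mp (by omega)

lemma eMixed_eq_cnt (E A : Multiset (V × V)) (P : Finset (Finset V)) :
    eMixed E A P = cnt (fun e => ∃ X ∈ P, edgeEnters e X) E +
      cnt (fun a => ∃ X ∈ P, arcEnters a X) A := by
  rw [eMixed, cnt_eq_card_filter, cnt_eq_card_filter]

lemma eMixed_cons_edge (e : V × V) (E A : Multiset (V × V)) (P : Finset (Finset V)) :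
    eMixed (e ::ₘ E) A P = eMixed E A P + ind (∃ X ∈ P, edgeEnters e X) := by
  simp only [eMixed_eq_cnt, cnt_cons]; omega

lemma eMixed_cons_arc (a : V × V) (E A : Multiset (V × V)) (P : Finset (Finset V)) :
    eMixed E (a ::ₘ A) P = eMixed E A P + ind (∃ X ∈ P, arcEnters a X) := by
  simp only [eMixed_eq_cnt, cnt_cons]; omega

lemma eMixed_cons_swap (e : V × V) (E A : Multiset (V × V)) (P : Finset (Finset V)) :
    eMixed (e.swap ::ₘ E) A P = eMixed (e ::ₘ E) A P := by
  simp only [eMixed_cons_edge, edgeEnters, Prod.fst_swap, Prod.snd_swap, or_comm]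

lemma exists_edgeEnters_iff {P : Finset (Finset V)} {e : V × V} :
    (∃ Z ∈ P, edgeEnters e Z) ↔
      (∃ Z ∈ P, e.1 ∈ Z ∧ e.2 ∉ Z) ∨ (∃ Z ∈ P, e.2 ∈ Z ∧ e.1 ∉ Z) := by
  simp only [edgeEnters, ← exists_or, and_or_left]

lemma eMixed_singleton (A : Multiset (V × V)) (X : Finset V) :
    eMixed 0 A {X} = inDeg A X := by
  rw [eMixed_eq_cnt, inDeg_eq_cnt, cnt_zero, zero_add]
  exact cnt_congr fun a _ => by simp

lemma eMixed_mono {E E' A A' : Multiset (V × V)} (hE : E ≤ E') (hA : A ≤ A')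
    (P : Finset (Finset V)) : eMixed E A P ≤ eMixed E' A' P := by
  simp only [eMixed_eq_cnt]
  exact add_le_add (cnt_le_of_le _ hE) (cnt_le_of_le _ hA)

lemma eMixed_sum {σ : Type*} (Ed Ar : σ → Multiset (V × V)) (F : Finset σ)
    (P : Finset (Finset V)) :
    eMixed (∑ s ∈ F, Ed s) (∑ s ∈ F, Ar s) P = ∑ s ∈ F, eMixed (Ed s) (Ar s) P := by
  simp only [eMixed_eq_cnt, cnt_sum, sum_add_distrib]

lemma Reaches.mono {A B : Multiset (V × V)} (h : A ≤ B) {u v : V} (hr : Reaches A u v) :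
    Reaches B u v :=
  Relation.ReflTransGen.mono (fun _ _ hxy => Multiset.mem_of_le h hxy) _ _ hr

lemma Reaches.exists_arcEnters {B : Multiset (V × V)} {u v : V} {X : Finset V}
    (h : Reaches B u v) (hu : u ∉ X) (hv : v ∈ X) : ∃ a ∈ B, arcEnters a X := by
  induction h with
  | refl => exact absurd hv hu
  | @tail b c _ hbc ih =>
    by_cases hb : b ∈ X
    · exact ih hb
    · exact ⟨(b, c), hbc, hv, hb⟩

end Degrees

section Coarsening

variable {V : Type*}

lemma IsSubpartition.eq_of_mem_of_mem {P : Finset (Finset V)} (hP : IsSubpartition P)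
    {X Y : Finset V} (hX : X ∈ P) (hY : Y ∈ P) {x : V} (hxX : x ∈ X) (hxY : x ∈ Y) : X = Y := by
  by_contra hne
  exact disjoint_left.mp (hP.2 X hX Y hY hne) hxX hxY

lemma IsSubpartition.mono {P P' : Finset (Finset V)} (hP : IsSubpartition P) (h : P' ⊆ P) :
    IsSubpartition P' :=
  ⟨fun X hX => hP.1 X (h hX), fun X hX Y hY => hP.2 X (h hX) Y (h hY)⟩

variable [DecidableEq V]

def absorb (Q : Finset (Finset V)) (Y : Finset V) : Finset (Finset V) :=
  insert (Y ∪ (Q.filter fun M => (M ∩ Y).Nonempty).biUnion id)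
    (Q.filter fun M => ¬(M ∩ Y).Nonempty)

variable {Q : Finset (Finset V)} {Y : Finset V}

lemma subset_absorb_of_meets {M : Finset V} (hM : M ∈ Q) (hMY : (M ∩ Y).Nonempty) :
    M ⊆ Y ∪ (Q.filter fun M => (M ∩ Y).Nonempty).biUnion id :=
  subset_union_right.trans' (subset_biUnion_of_mem id (mem_filter.mpr ⟨hM, hMY⟩))

lemma exists_superset_mem_absorb {M : Finset V} (hM : M ∈ insert Y Q) :
    ∃ M' ∈ absorb Q Y, M ⊆ M' := by
  rcases mem_insert.mp hM with rfl | hM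
  · exact ⟨_, mem_insert_self _ _, subset_union_left⟩
  · by_cases hMY : (M ∩ Y).Nonempty
    · exact ⟨_, mem_insert_self _ _, subset_absorb_of_meets hM hMY⟩
    · exact ⟨M, mem_insert_of_mem (mem_filter.mpr ⟨hM, hMY⟩), subset_rfl⟩

lemma biUnion_absorb : (absorb Q Y).biUnion id = Q.biUnion id ∪ Y := by
  ext x
  simp only [absorb, mem_biUnion, mem_insert, mem_union, mem_filter, id]
  constructor
  · rintro ⟨M, rfl | ⟨hM, -⟩, hx⟩
    · simp only [mem_union, mem_biUnion, mem_filter, id] at hx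
      rcases hx with hx | ⟨N, ⟨hN, -⟩, hxN⟩
      · exact Or.inr hx
      · exact Or.inl ⟨N, hN, hxN⟩
    · exact Or.inl ⟨M, hM, hx⟩
  · rintro (⟨M, hM, hx⟩ | hx)
    · obtain ⟨M', hM', hMM'⟩ := exists_superset_mem_absorb (mem_insert_of_mem hM)
      exact ⟨M', by simpa [absorb] using hM', hMM' hx⟩
    · exact ⟨_, Or.inl rfl, mem_union_left _ hx⟩

lemma disjoint_absorb_of_not_meets (hQ : IsSubpartition Q) {N : Finset V} (hN : N ∈ Q)
    (hNY : ¬(N ∩ Y).Nonempty) :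
    Disjoint N (Y ∪ (Q.filter fun M => (M ∩ Y).Nonempty).biUnion id) := by
  refine disjoint_union_right.mpr ⟨?_, disjoint_biUnion_right _ _ _ |>.mpr fun M hM => ?_⟩
  · rwa [disjoint_iff_inter_eq_empty, ← not_nonempty_iff_eq_empty]
  · obtain ⟨hMQ, hMY⟩ := mem_filter.mp hM
    exact hQ.2 N hN M hMQ (by rintro rfl; exact hNY hMY)

lemma IsSubpartition.absorb (hQ : IsSubpartition Q) (hY : Y.Nonempty) :
    IsSubpartition (absorb Q Y) := by
  have hrest : IsSubpartition (Q.filter fun M => ¬(M ∩ Y).Nonempty) :=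
    hQ.mono (filter_subset _ _)
  refine ⟨fun X hX => ?_, fun X hX Z hZ hXZ => ?_⟩
  · rcases mem_insert.mp hX with rfl | hX
    · exact hY.mono subset_union_left
    · exact hrest.1 X hX
  · rcases mem_insert.mp hX with rfl | hX <;> rcases mem_insert.mp hZ with rfl | hZ
    · exact absurd rfl hXZ
    · exact (disjoint_absorb_of_not_meets hQ (mem_filter.mp hZ).1 (mem_filter.mp hZ).2).symm
    · exact disjoint_absorb_of_not_meets hQ (mem_filter.mp hX).1 (mem_filter.mp hX).2
    · exact hrest.2 X hX Z hZ hXZ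

lemma card_absorb (hQ : IsSubpartition Q) (hY : Y.Nonempty) :
    (absorb Q Y).card + (Q.filter fun M => (M ∩ Y).Nonempty).card = Q.card + 1 := by
  have hnew : Y ∪ (Q.filter fun M => (M ∩ Y).Nonempty).biUnion id ∉
      Q.filter fun M => ¬(M ∩ Y).Nonempty := by
    intro h
    obtain ⟨y, hy⟩ := hY
    exact disjoint_left.mp (disjoint_absorb_of_not_meets hQ (mem_filter.mp h).1
      (mem_filter.mp h).2) (mem_union_left _ hy) (mem_union_left _ hy)
  rw [absorb, card_insert_of_notMem hnew, add_right_comm, add_comm (card _),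
    card_filter_add_card_filter_not]

end Coarsening

section Uncrossing

variable {V : Type*} [DecidableEq V]

def IsCommonCoarsening (Q P₁ P₂ : Finset (Finset V)) : Prop :=
  IsSubpartition Q ∧ Q.biUnion id = P₁.biUnion id ∪ P₂.biUnion id ∧
    ∀ W ∈ P₁ ∪ P₂, ∃ M ∈ Q, W ⊆ M

def numMeetingPairs (P₁ P₂ : Finset (Finset V)) : ℕ :=
  ∑ X ∈ P₁, ∑ Y ∈ P₂, if (X ∩ Y).Nonempty then 1 else 0

lemma numMeetingPairs_insert (P₁ P₂ : Finset (Finset V)) {Y : Finset V} (hY : Y ∉ P₂) :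
    numMeetingPairs P₁ (insert Y P₂) =
      numMeetingPairs P₁ P₂ + (P₁.filter fun X => (X ∩ Y).Nonempty).card := by
  rw [card_filter, numMeetingPairs, numMeetingPairs, ← sum_add_distrib]
  exact sum_congr rfl fun X _ => by rw [sum_insert hY, add_comm]

variable {P₁ P₂ Q : Finset (Finset V)}

lemma IsCommonCoarsening.card_filter_meets_le (hQ : IsCommonCoarsening Q P₁ P₂)
    (h₁ : IsSubpartition P₁) {Y : Finset V} (hY : ∀ Z ∈ P₂, Disjoint Y Z) :
    (Q.filter fun M => (M ∩ Y).Nonempty).card ≤ (P₁.filter fun X => (X ∩ Y).Nonempty).card := by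
  obtain ⟨hQsub, hQbi, hQcov⟩ := hQ
  refine card_le_card_of_forall_subsingleton (fun M X => X ⊆ M) (fun M hM => ?_) ?_
  · obtain ⟨hMQ, y, hy⟩ := mem_filter.mp hM
    obtain ⟨hyM, hyY⟩ := mem_inter.mp hy
    have hyU : y ∈ P₁.biUnion id ∪ P₂.biUnion id := hQbi ▸ mem_biUnion.mpr ⟨M, hMQ, hyM⟩
    obtain ⟨X, hX, hyX⟩ : ∃ X ∈ P₁, y ∈ X := by
      rcases mem_union.mp hyU with h | h
      · exact mem_biUnion.mp h
      · obtain ⟨Z, hZ, hyZ⟩ := mem_biUnion.mp h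
        exact absurd hyZ (disjoint_left.mp (hY Z hZ) hyY)
    obtain ⟨M', hM', hXM'⟩ := hQcov X (mem_union_left _ hX)
    have hMM' : M' = M := hQsub.eq_of_mem_of_mem hM' hMQ (hXM' hyX) hyM
    exact ⟨X, mem_filter.mpr ⟨hX, y, mem_inter.mpr ⟨hyX, hyY⟩⟩, hMM' ▸ hXM'⟩
  · intro X hX M₁ hM₁ M₂ hM₂
    obtain ⟨x, hx⟩ := h₁.1 X (mem_filter.mp hX).1
    exact hQsub.eq_of_mem_of_mem (mem_filter.mp hM₁.1).1 (mem_filter.mp hM₂.1).1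
      (hM₁.2 hx) (hM₂.2 hx)

lemma IsCommonCoarsening.absorb (hQ : IsCommonCoarsening Q P₁ P₂) {Y : Finset V}
    (hY : Y.Nonempty) : IsCommonCoarsening (absorb Q Y) P₁ (insert Y P₂) := by
  obtain ⟨hQsub, hQbi, hQcov⟩ := hQ
  refine ⟨hQsub.absorb hY, ?_, fun W hW => ?_⟩
  · rw [biUnion_absorb, hQbi, biUnion_insert, id, union_assoc, union_comm Y]
  · rcases mem_union.mp hW with hW | hW
    · obtain ⟨M, hM, hWM⟩ := hQcov W (mem_union_left _ hW)
      obtain ⟨M', hM', hMM'⟩ := exists_superset_mem_absorb (mem_insert_of_mem hM)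
      exact ⟨M', hM', hWM.trans hMM'⟩
    · rcases mem_insert.mp hW with rfl | hW
      · exact exists_superset_mem_absorb (mem_insert_self _ _)
      · obtain ⟨M, hM, hWM⟩ := hQcov W (mem_union_right _ hW)
        obtain ⟨M', hM', hMM'⟩ := exists_superset_mem_absorb (mem_insert_of_mem hM)
        exact ⟨M', hM', hWM.trans hMM'⟩

/-- When the blocks `Y` of `P₂` are absorbed one at a time, `Y` swallows at most as many blocks
as there are blocks of `P₁` meeting it. -/
lemma exists_isCommonCoarsening (h₁ : IsSubpartition P₁) (h₂ : IsSubpartition P₂) :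
    ∃ Q, IsCommonCoarsening Q P₁ P₂ ∧ P₁.card + P₂.card ≤ Q.card + numMeetingPairs P₁ P₂ := by
  induction P₂ using Finset.induction_on with
  | empty =>
    refine ⟨P₁, ⟨h₁, by simp, fun W hW => ⟨W, by simpa using hW, subset_rfl⟩⟩, ?_⟩
    simp [numMeetingPairs]
  | @insert Y P₂ hYP₂ ih =>
    obtain ⟨Q, hQ, hcard⟩ := ih (h₂.mono (subset_insert _ _))
    have hY : Y.Nonempty := h₂.1 Y (mem_insert_self _ _)
    have hYdisj : ∀ Z ∈ P₂, Disjoint Y Z := fun Z hZ =>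
      h₂.2 Y (mem_insert_self _ _) Z (mem_insert_of_mem hZ) (by rintro rfl; exact hYP₂ hZ)
    refine ⟨absorb Q Y, hQ.absorb hY, ?_⟩
    have habs := card_absorb hQ.1 hY
    have hmeets := hQ.card_filter_meets_le h₁ hYdisj
    rw [card_insert_of_notMem hYP₂, numMeetingPairs_insert _ _ hYP₂]
    omega

def commonRefinement (P₁ P₂ : Finset (Finset V)) : Finset (Finset V) :=
  ((P₁ ×ˢ P₂).filter fun p => (p.1 ∩ p.2).Nonempty).image fun p => p.1 ∩ p.2

lemma mem_commonRefinement {Z : Finset V} :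
    Z ∈ commonRefinement P₁ P₂ ↔ ∃ X ∈ P₁, ∃ Y ∈ P₂, (X ∩ Y).Nonempty ∧ X ∩ Y = Z := by
  simp [commonRefinement, and_assoc]

lemma IsSubpartition.commonRefinement (h₁ : IsSubpartition P₁) (h₂ : IsSubpartition P₂) :
    IsSubpartition (commonRefinement P₁ P₂) := by
  refine ⟨fun Z hZ => ?_, fun Z hZ Z' hZ' hne => ?_⟩
  · obtain ⟨X, -, Y, -, hXY, rfl⟩ := mem_commonRefinement.mp hZ
    exact hXY
  · obtain ⟨X, hX, Y, hY, -, rfl⟩ := mem_commonRefinement.mp hZ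
    obtain ⟨X', hX', Y', hY', -, rfl⟩ := mem_commonRefinement.mp hZ'
    refine disjoint_left.mpr fun x hx hx' => hne ?_
    rw [mem_inter] at hx hx'
    rw [h₁.eq_of_mem_of_mem hX hX' hx.1 hx'.1, h₂.eq_of_mem_of_mem hY hY' hx.2 hx'.2]

lemma card_commonRefinement (h₁ : IsSubpartition P₁) (h₂ : IsSubpartition P₂) :
    (commonRefinement P₁ P₂).card = numMeetingPairs P₁ P₂ := by
  rw [commonRefinement, card_image_of_injOn, card_filter, sum_product, numMeetingPairs]
  rintro ⟨X, Y⟩ hXY ⟨X', Y'⟩ hXY' (heq : X ∩ Y = X' ∩ Y')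
  simp only [coe_filter, mem_product, Set.mem_ofPred_eq] at hXY hXY'
  obtain ⟨z, hz⟩ := hXY.2
  have hz' : z ∈ X' ∩ Y' := heq ▸ hz
  rw [mem_inter] at hz hz'
  rw [h₁.eq_of_mem_of_mem hXY.1.1 hXY'.1.1 hz.1 hz'.1,
    h₂.eq_of_mem_of_mem hXY.1.2 hXY'.1.2 hz.2 hz'.2]

lemma biUnion_commonRefinement_subset :
    (commonRefinement P₁ P₂).biUnion id ⊆ P₁.biUnion id ∩ P₂.biUnion id := by
  intro x hx
  obtain ⟨Z, hZ, hxZ⟩ := mem_biUnion.mp hx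
  obtain ⟨X, hX, Y, hY, -, rfl⟩ := mem_commonRefinement.mp hZ
  rw [id, mem_inter] at hxZ
  exact mem_inter.mpr ⟨mem_biUnion.mpr ⟨X, hX, hxZ.1⟩, mem_biUnion.mpr ⟨Y, hY, hxZ.2⟩⟩

end Uncrossing

section Crossing

variable {V : Type*} [DecidableEq V] {P₁ P₂ Q : Finset (Finset V)} {c d : V}

lemma IsCommonCoarsening.exists_crossing (hQ : IsCommonCoarsening Q P₁ P₂)
    (h : ∃ Z ∈ Q, c ∈ Z ∧ d ∉ Z) :
    (∃ W ∈ P₁, c ∈ W ∧ d ∉ W) ∨ (∃ W ∈ P₂, c ∈ W ∧ d ∉ W) := by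
  obtain ⟨hQsub, hQbi, hQcov⟩ := hQ
  obtain ⟨Z, hZ, hc, hd⟩ := h
  have hcU : c ∈ P₁.biUnion id ∪ P₂.biUnion id := hQbi ▸ mem_biUnion.mpr ⟨Z, hZ, hc⟩
  obtain ⟨W, hW, hcW⟩ : ∃ W ∈ P₁ ∪ P₂, c ∈ W := by
    rcases mem_union.mp hcU with h | h <;> obtain ⟨W, hW, hcW⟩ := mem_biUnion.mp h
    exacts [⟨W, mem_union_left _ hW, hcW⟩, ⟨W, mem_union_right _ hW, hcW⟩]
  obtain ⟨M, hM, hWM⟩ := hQcov W hW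
  have hMZ : M = Z := hQsub.eq_of_mem_of_mem hM hZ (hWM hcW) hc
  have hdW : d ∉ W := fun hdW => hd (hMZ ▸ hWM hdW)
  rcases mem_union.mp hW with hW | hW
  · exact Or.inl ⟨W, hW, hcW, hdW⟩
  · exact Or.inr ⟨W, hW, hcW, hdW⟩

lemma exists_crossing_of_commonRefinement (h : ∃ Z ∈ commonRefinement P₁ P₂, c ∈ Z ∧ d ∉ Z) :
    (∃ W ∈ P₁, c ∈ W ∧ d ∉ W) ∨ (∃ W ∈ P₂, c ∈ W ∧ d ∉ W) := by
  obtain ⟨Z, hZ, hc, hd⟩ := h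
  obtain ⟨X, hX, Y, hY, -, rfl⟩ := mem_commonRefinement.mp hZ
  rw [mem_inter] at hc hd
  by_cases hdX : d ∈ X
  · exact Or.inr ⟨Y, hY, hc.2, fun hdY => hd ⟨hdX, hdY⟩⟩
  · exact Or.inl ⟨X, hX, hc.1, hdX⟩

/-- The blocks of `P₁` and `P₂` through a vertex `c` lie in one block of `Q`, so a pair
separated by `Q` is separated by both of them. -/
lemma IsCommonCoarsening.crossing_both (hQ : IsCommonCoarsening Q P₁ P₂)
    (h : ∃ Z ∈ commonRefinement P₁ P₂, c ∈ Z ∧ d ∉ Z)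
    (hsep : (∃ Z ∈ Q, c ∈ Z ∧ d ∉ Z) ∨ (∃ Z ∈ Q, d ∈ Z ∧ c ∉ Z)) :
    (∃ W ∈ P₁, c ∈ W ∧ d ∉ W) ∧ (∃ W ∈ P₂, c ∈ W ∧ d ∉ W) := by
  obtain ⟨hQsub, -, hQcov⟩ := hQ
  obtain ⟨Z, hZ, hc, -⟩ := h
  obtain ⟨X, hX, Y, hY, -, rfl⟩ := mem_commonRefinement.mp hZ
  rw [mem_inter] at hc
  obtain ⟨M, hM, hXM⟩ := hQcov X (mem_union_left _ hX)
  obtain ⟨M', hM', hYM'⟩ := hQcov Y (mem_union_right _ hY)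
  have hMM' : M' = M := hQsub.eq_of_mem_of_mem hM' hM (hYM' hc.2) (hXM hc.1)
  subst hMM'
  have hdM : d ∉ M' := by
    intro hdM
    rcases hsep with ⟨Z', hZ', hcZ', hdZ'⟩ | ⟨Z', hZ', hdZ', hcZ'⟩
    · exact hdZ' (hQsub.eq_of_mem_of_mem hM' hZ' (hXM hc.1) hcZ' ▸ hdM)
    · exact hcZ' (hQsub.eq_of_mem_of_mem hM' hZ' hdM hdZ' ▸ hXM hc.1)
  exact ⟨⟨X, hX, hc.1, fun h => hdM (hXM h)⟩, ⟨Y, hY, hc.2, fun h => hdM (hYM' h)⟩⟩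

lemma IsCommonCoarsening.ind_arcEnters_le (hQ : IsCommonCoarsening Q P₁ P₂) (a : V × V) :
    ind (∃ Z ∈ Q, arcEnters a Z) + ind (∃ Z ∈ commonRefinement P₁ P₂, arcEnters a Z) ≤
      ind (∃ X ∈ P₁, arcEnters a X) + ind (∃ Y ∈ P₂, arcEnters a Y) :=
  ind_add_ind_le (fun h => hQ.crossing_both h.2 (Or.inl h.1))
    (fun h => h.elim hQ.exists_crossing exists_crossing_of_commonRefinement)

lemma IsCommonCoarsening.ind_edgeEnters_le (hQ : IsCommonCoarsening Q P₁ P₂) (e : V × V) :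
    ind (∃ Z ∈ Q, edgeEnters e Z) + ind (∃ Z ∈ commonRefinement P₁ P₂, edgeEnters e Z) ≤
      ind (∃ X ∈ P₁, edgeEnters e X) + ind (∃ Y ∈ P₂, edgeEnters e Y) := by
  simp only [exists_edgeEnters_iff]
  refine ind_add_ind_le ?_ ?_
  · rintro ⟨hq, hr | hr⟩
    · exact (hQ.crossing_both hr hq).imp Or.inl Or.inl
    · exact (hQ.crossing_both hr hq.symm).imp Or.inr Or.inr
  · rintro ((h | h) | (h | h))
    · exact (hQ.exists_crossing h).imp Or.inl Or.inl
    · exact (hQ.exists_crossing h).imp Or.inr Or.inr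
    · exact (exists_crossing_of_commonRefinement h).imp Or.inl Or.inl
    · exact (exists_crossing_of_commonRefinement h).imp Or.inr Or.inr

lemma IsCommonCoarsening.eMixed_add_eMixed_le (hQ : IsCommonCoarsening Q P₁ P₂)
    (E A : Multiset (V × V)) :
    eMixed E A Q + eMixed E A (commonRefinement P₁ P₂) ≤ eMixed E A P₁ + eMixed E A P₂ := by
  have hE := cnt_add_cnt_le (M := E) fun e _ => hQ.ind_edgeEnters_le e
  have hA := cnt_add_cnt_le (M := A) fun a _ => hQ.ind_arcEnters_le a
  simp only [eMixed_eq_cnt]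
  omega

end Crossing

section Orientation

variable {V : Type*} [DecidableEq V] {ι : Type*} [Fintype ι]

def SubpartitionBound (ρ : ι → V) (E A : Multiset (V × V)) : Prop :=
  ∀ P : Finset (Finset V), IsSubpartition P →
    Fintype.card ι * P.card ≤ eMixed E A P + rootCount ρ (P.biUnion id)

def CutBound (ρ : ι → V) (D : Multiset (V × V)) : Prop :=
  ∀ X : Finset V, X.Nonempty → Fintype.card ι ≤ inDeg D X + rootCount ρ X

variable {ρ : ι → V} {E A : Multiset (V × V)}

lemma SubpartitionBound.cutBound {D : Multiset (V × V)} (h : SubpartitionBound ρ 0 D) :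
    CutBound ρ D := fun X hX => by
  simpa [eMixed_singleton] using h {X} ⟨by simpa using hX, by simp⟩

lemma SubpartitionBound.swap {e : V × V} (h : SubpartitionBound ρ (e ::ₘ E) A) :
    SubpartitionBound ρ (e.swap ::ₘ E) A := fun P hP => by
  rw [eMixed_cons_swap]
  exact h P hP

lemma SubpartitionBound.tight_of_lt {a : V × V} (h : SubpartitionBound ρ (a ::ₘ E) A)
    {P : Finset (Finset V)} (hP : IsSubpartition P)
    (hlt : eMixed E (a ::ₘ A) P + rootCount ρ (P.biUnion id) < Fintype.card ι * P.card) :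
    Fintype.card ι * P.card = eMixed E A P + 1 + rootCount ρ (P.biUnion id) ∧
      a.1 ∈ P.biUnion id ∧ a.2 ∉ P.biUnion id := by
  have hb := h P hP
  rw [eMixed_cons_edge] at hb
  rw [eMixed_cons_arc] at hlt
  have hedge : ∃ X ∈ P, edgeEnters a X := by
    by_contra hn
    rw [ind_eq_zero hn] at hb
    omega
  have harc : ¬∃ X ∈ P, arcEnters a X := by
    intro ha
    have := ind_le_one (∃ X ∈ P, edgeEnters a X)
    rw [ind_eq_one ha] at hlt
    omega
  rw [ind_eq_one hedge] at hb
  rw [ind_eq_zero harc] at hlt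
  obtain ⟨X, hX, ⟨h1, h2⟩ | ⟨h2, h1⟩⟩ := hedge
  · refine ⟨by omega, mem_biUnion.mpr ⟨X, hX, h1⟩, fun h2' => ?_⟩
    obtain ⟨Y, hY, h2Y⟩ := mem_biUnion.mp h2'
    refine harc ⟨Y, hY, h2Y, fun h1Y => h2 ?_⟩
    rwa [hP.eq_of_mem_of_mem hX hY h1 h1Y]
  · exact absurd ⟨X, hX, h2, h1⟩ harc

lemma SubpartitionBound.orient_cons {e : V × V} (h : SubpartitionBound ρ (e ::ₘ E) A) :
    SubpartitionBound ρ E (e ::ₘ A) ∨ SubpartitionBound ρ E (e.swap ::ₘ A) := by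
  by_contra! hn
  simp only [SubpartitionBound, not_forall, not_le, exists_prop] at hn
  obtain ⟨⟨P₁, h₁, hlt₁⟩, ⟨P₂, h₂, hlt₂⟩⟩ := hn
  obtain ⟨tight₁, -, he₂⟩ := h.tight_of_lt h₁ hlt₁
  obtain ⟨tight₂, -, he₁⟩ := h.swap.tight_of_lt h₂ hlt₂
  obtain ⟨Q, hQ, hcard⟩ := exists_isCommonCoarsening h₁ h₂
  have hR := h₁.commonRefinement h₂
  have hRe : ¬∃ Z ∈ commonRefinement P₁ P₂, edgeEnters e Z := by
    rintro ⟨Z, hZ, ⟨hin, -⟩ | ⟨hin, -⟩⟩ <;>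
      have := mem_inter.mp (biUnion_commonRefinement_subset (mem_biUnion.mpr ⟨Z, hZ, hin⟩))
    · exact he₁ this.2
    · exact he₂ this.1
  have hbQ := h Q hQ.1
  have hbR := h _ hR
  rw [eMixed_cons_edge] at hbQ hbR
  rw [ind_eq_zero hRe] at hbR
  have hind := ind_le_one (∃ Z ∈ Q, edgeEnters e Z)
  have hsub := hQ.eMixed_add_eMixed_le E A
  have hroots := rootCount_union_add_inter ρ (P₁.biUnion id) (P₂.biUnion id)
  have hrootR := rootCount_mono ρ (biUnion_commonRefinement_subset (P₁ := P₁) (P₂ := P₂))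
  have hmul := Nat.mul_le_mul_left (Fintype.card ι)
    (card_commonRefinement h₁ h₂ ▸ hcard)
  rw [hQ.2.1] at hbQ
  simp only [Nat.mul_add] at hmul
  omega

lemma SubpartitionBound.exists_orientation (h : SubpartitionBound ρ E A) :
    ∃ Eo, IsOrientationOf E Eo ∧ SubpartitionBound ρ 0 (Eo + A) := by
  induction E using Multiset.induction generalizing A with
  | empty => exact ⟨0, Multiset.Rel.zero, by rwa [zero_add]⟩
  | cons e E ih =>
    rcases h.orient_cons with h' | h'
    · obtain ⟨Eo, hEo, hb⟩ := ih h'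
      refine ⟨e ::ₘ Eo, Multiset.Rel.cons (Or.inl rfl) hEo, ?_⟩
      rwa [Multiset.cons_add, ← Multiset.add_cons]
    · obtain ⟨Eo, hEo, hb⟩ := ih h'
      refine ⟨e.swap ::ₘ Eo, Multiset.Rel.cons (Or.inr rfl) hEo, ?_⟩
      rwa [Multiset.cons_add, ← Multiset.add_cons]

end Orientation

section Branchings

variable {V : Type*} [DecidableEq V] {ι : Type*} [Fintype ι] {ρ : ι → V}

/-- The cut bound for the roots `ρ` together with one more root standing for all of `U`. -/
def CutBoundWith (ρ : ι → V) (U : Finset V) (D : Multiset (V × V)) : Prop :=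
  ∀ X : Finset V, X.Nonempty →
    Fintype.card ι + 1 ≤ inDeg D X + rootCount ρ X + ind (X ∩ U).Nonempty

/-- Lovász's choice of the next arc: it leaves `U` and enters no tight set meeting `U`. It is
taken into a smallest set `Z` that is tight or worse and sticks out of `U`, and tight sets
entered by it would cut `Z` down further. -/
lemma CutBoundWith.exists_safe_arc [Fintype V] {U : Finset V} {D : Multiset (V × V)}
    (hinv : CutBoundWith ρ U D) (hU : U ≠ univ) :
    ∃ a ∈ D, a.1 ∈ U ∧ a.2 ∉ U ∧ ∀ X : Finset V, (X ∩ U).Nonempty → arcEnters a X →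
      Fintype.card ι < inDeg D X + rootCount ρ X := by
  set 𝒯 := univ.filter fun Z : Finset V =>
    (Z \ U).Nonempty ∧ inDeg D Z + rootCount ρ Z ≤ Fintype.card ι
  have huniv : univ ∈ 𝒯 := mem_filter.mpr ⟨mem_univ _,
    sdiff_nonempty.mpr fun h => hU (eq_univ_of_forall fun x => h (mem_univ x)),
    by rw [inDeg_univ, rootCount_univ, zero_add]⟩
  obtain ⟨Z, hZ, hmin⟩ := exists_min_image 𝒯 card ⟨univ, huniv⟩
  obtain ⟨hZU, hZtight⟩ := (mem_filter.mp hZ).2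
  have hin := hinv (Z \ U) hZU
  rw [sdiff_inter_self, ind_eq_zero (by simp)] at hin
  have hroot := rootCount_mono ρ (sdiff_subset (s := Z) (t := U))
  obtain ⟨a, haD, haZ, haU, ha₂⟩ :=
    exists_arc_of_inDeg_lt (D := D) (sdiff_subset : Z \ U ⊆ Z) (by omega)
  have ha₁ : a.1 ∈ U := by simpa [haZ] using haU
  refine ⟨a, haD, ha₁, (mem_sdiff.mp ha₂).2, fun X hXU hent => ?_⟩
  by_contra! hX
  have hcup := hinv (X ∪ Z) (hXU.mono (inter_subset_left.trans subset_union_left))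
  rw [ind_eq_one (hXU.mono (inter_subset_inter_right subset_union_left))] at hcup
  have hsub := inDeg_union_add_inter_le D X Z
  have hmod := rootCount_union_add_inter ρ X Z
  have hXZ : X ∩ Z ∈ 𝒯 := mem_filter.mpr ⟨mem_univ _,
    ⟨a.2, mem_sdiff.mpr ⟨mem_inter.mpr ⟨hent.1, (mem_sdiff.mp ha₂).1⟩, (mem_sdiff.mp ha₂).2⟩⟩,
    by omega⟩
  have hZX : Z ⊆ X := by
    rw [← eq_of_subset_of_card_le inter_subset_right (hmin _ hXZ)]
    exact inter_subset_left
  exact hent.2 (hZX haZ)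

lemma inDegV_cons (a : V × V) (T : Multiset (V × V)) (v : V) :
    inDegV (a ::ₘ T) v = inDegV T v + ind (a.2 = v) := by
  simp only [inDegV_eq_cnt, cnt_cons]

lemma isArborOn_singleton (r : V) : IsArborOn 0 {r} r :=
  ⟨mem_singleton_self r, by simp, fun v hv hvr => absurd (mem_singleton.mp hv) hvr, rfl,
    fun v hv => mem_singleton.mp hv ▸ Relation.ReflTransGen.refl⟩

lemma IsArborOn.cons {T : Multiset (V × V)} {U : Finset V} {r : V} (hT : IsArborOn T U r)
    {a : V × V} (ha₁ : a.1 ∈ U) (ha₂ : a.2 ∉ U) : IsArborOn (a ::ₘ T) (insert a.2 U) r := by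
  obtain ⟨hrU, harcs, hdeg, hdegr, hreach⟩ := hT
  have hTle : T ≤ a ::ₘ T := Multiset.le_cons_self T a
  refine ⟨mem_insert_of_mem hrU, fun b hb => ?_, fun v hv hvr => ?_, ?_, fun v hv => ?_⟩
  · rcases Multiset.mem_cons.mp hb with rfl | hb
    · exact ⟨mem_insert_of_mem ha₁, mem_insert_self _ _⟩
    · exact (harcs b hb).imp mem_insert_of_mem mem_insert_of_mem
  · rw [inDegV_cons]
    rcases mem_insert.mp hv with rfl | hv
    · rw [inDegV_eq_cnt, cnt_eq_zero fun b hb (hbv : b.2 = a.2) => ha₂ (hbv ▸ (harcs b hb).2),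
        ind_eq_one rfl]
    · rw [hdeg v hv hvr, ind_eq_zero fun (h : a.2 = v) => ha₂ (h ▸ hv)]
  · rw [inDegV_cons, hdegr, ind_eq_zero fun (h : a.2 = r) => ha₂ (h ▸ hrU)]
  · rcases mem_insert.mp hv with rfl | hv
    · exact (hreach a.1 ha₁).mono hTle |>.tail (Multiset.mem_cons_self a T)
    · exact (hreach v hv).mono hTle

lemma CutBoundWith.erase {U : Finset V} {D : Multiset (V × V)} (hinv : CutBoundWith ρ U D)
    {a : V × V} (ha : a ∈ D)
    (hsafe : ∀ X : Finset V, (X ∩ U).Nonempty → arcEnters a X →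
      Fintype.card ι < inDeg D X + rootCount ρ X) :
    CutBoundWith ρ (insert a.2 U) (D.erase a) := by
  intro X hX
  have hdeg : inDeg D X = inDeg (D.erase a) X + ind (arcEnters a X) := by
    conv_lhs => rw [← Multiset.cons_erase ha]
    simp only [inDeg_eq_cnt, cnt_cons]
  have hmono : ind (X ∩ U).Nonempty ≤ ind (X ∩ insert a.2 U).Nonempty :=
    ind_mono fun h => h.mono (inter_subset_inter_left (subset_insert _ _))
  have h := hinv X hX
  by_cases hent : arcEnters a X
  · rw [ind_eq_one hent] at hdeg
    rw [ind_eq_one ⟨a.2, mem_inter.mpr ⟨hent.1, mem_insert_self _ _⟩⟩]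
    by_cases hXU : (X ∩ U).Nonempty
    · have := hsafe X hXU hent
      omega
    · rw [ind_eq_zero hXU] at h
      omega
  · rw [ind_eq_zero hent] at hdeg
    omega

/-- Lovász's proof of Edmonds' theorem: the `r`-arborescence `T` on `U` grows one safe arc at
a time. -/
lemma exists_spanning_extension [Fintype V] (n : ℕ) :
    ∀ (U : Finset V) (T D : Multiset (V × V)) (r : V), (univ \ U).card = n → IsArborOn T U r →
      CutBoundWith ρ U D → ∃ B ≤ D, IsSpanningArbor (T + B) r ∧ CutBound ρ (D - B) := by
  induction n with
  | zero =>
    intro U T D r hcard hT hinv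
    have hU : U = univ := by simpa [sdiff_eq_empty_iff_subset, eq_univ_iff_forall] using hcard
    subst hU
    refine ⟨0, Multiset.zero_le _, by simpa [IsSpanningArbor] using hT, fun X hX => ?_⟩
    have := hinv X hX
    rw [inter_univ, ind_eq_one hX] at this
    simpa using this
  | succ n ih =>
    intro U T D r hcard hT hinv
    have hU : U ≠ univ := by rintro rfl; simp at hcard
    obtain ⟨a, haD, ha₁, ha₂, hsafe⟩ := hinv.exists_safe_arc hU
    have hcard' : (univ \ insert a.2 U).card = n := by
      rw [card_sdiff_of_subset (subset_univ _)] at hcard ⊢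
      rw [card_insert_of_notMem ha₂]
      omega
    obtain ⟨B, hB, hspan, hcut⟩ := ih _ _ _ r hcard' (hT.cons ha₁ ha₂)
      (hinv.erase haD hsafe)
    refine ⟨a ::ₘ B, Multiset.cons_erase haD ▸ Multiset.cons_le_cons a hB, ?_, ?_⟩
    · rwa [Multiset.add_cons, ← Multiset.cons_add]
    · rwa [Multiset.sub_cons]

lemma exists_arborescence_packing_fin [Fintype V] :
    ∀ (m : ℕ) (ρ : Fin m → V) (D : Multiset (V × V)), CutBound ρ D →
      ∃ B : Fin m → Multiset (V × V), ∑ i, B i ≤ D ∧ ∀ i, IsSpanningArbor (B i) (ρ i)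
  | 0, _, _, _ => ⟨fun _ => 0, by simp, fun i => i.elim0⟩
  | m + 1, ρ, D, h => by
    have hinv : CutBoundWith (ρ ∘ Fin.succ) {ρ 0} D := by
      intro X hX
      have hroot : (X ∩ {ρ 0}).Nonempty ↔ ρ 0 ∈ X := by simp [Finset.Nonempty]
      have := h X hX
      rw [rootCount_fin_succ, Fintype.card_fin] at this
      rw [hroot, Fintype.card_fin]
      omega
    obtain ⟨B₀, hB₀, hspan, hcut⟩ :=
      exists_spanning_extension _ _ 0 D (ρ 0) rfl (isArborOn_singleton _) hinv
    obtain ⟨B, hB, harb⟩ := exists_arborescence_packing_fin m (ρ ∘ Fin.succ) (D - B₀) hcut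
    refine ⟨Fin.cons B₀ B, ?_, Fin.cases (by simpa using hspan) harb⟩
    rw [Fin.sum_univ_succ, Fin.cons_zero]
    simp only [Fin.cons_succ]
    calc B₀ + ∑ i, B i ≤ B₀ + (D - B₀) := add_le_add_right hB _
      _ = D := add_tsub_cancel_of_le hB₀

/-- Edmonds' branching theorem. -/
theorem CutBound.exists_arborescence_packing [Fintype V] {D : Multiset (V × V)}
    (h : CutBound ρ D) :
    ∃ B : ι → Multiset (V × V), ∑ i, B i ≤ D ∧ ∀ i, IsSpanningArbor (B i) (ρ i) := by
  set e := Fintype.equivFin ι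
  obtain ⟨B, hB, harb⟩ := exists_arborescence_packing_fin _ (ρ ∘ e.symm) D fun X hX => by
    simpa [rootCount_comp_equiv] using h X hX
  refine ⟨B ∘ e, ?_, fun i => by simpa using harb (e i)⟩
  rwa [Function.comp_def, e.sum_comp B]

end Branchings

section Necessity

variable {V : Type*}

lemma IsOrientationOf.cnt_arcEnters_le {Ed Eo : Multiset (V × V)} (h : IsOrientationOf Ed Eo)
    (P : Finset (Finset V)) :
    cnt (fun a => ∃ X ∈ P, arcEnters a X) Eo ≤ cnt (fun e => ∃ X ∈ P, edgeEnters e X) Ed :=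
  cnt_le_cnt_of_rel h fun e a hea ⟨X, hX, h₂, h₁⟩ => ⟨X, hX, by
    rcases hea with rfl | rfl
    exacts [Or.inr ⟨h₂, h₁⟩, Or.inl ⟨h₂, h₁⟩]⟩

variable [DecidableEq V]

lemma IsSubpartition.card_filter_mem_le {P : Finset (Finset V)} (hP : IsSubpartition P) (r : V) :
    (P.filter fun X => r ∈ X).card ≤ ind (r ∈ P.biUnion id) := by
  by_cases hr : r ∈ P.biUnion id
  · rw [ind_eq_one hr, card_le_one]
    intro X hX Y hY
    exact hP.eq_of_mem_of_mem (mem_filter.mp hX).1 (mem_filter.mp hY).1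
      (mem_filter.mp hX).2 (mem_filter.mp hY).2
  · rw [ind_eq_zero hr, Nat.le_zero, card_eq_zero, filter_eq_empty_iff]
    exact fun X hX hrX => hr (mem_biUnion.mpr ⟨X, hX, hrX⟩)

/-- Every block of `P` avoiding the root is entered by an arc of the arborescence, and these
arcs are distinct because their heads lie in disjoint blocks. -/
lemma IsSpanningArbor.card_le [Fintype V] {B : Multiset (V × V)} {r : V}
    (hB : IsSpanningArbor B r) {P : Finset (Finset V)} (hP : IsSubpartition P) :
    P.card ≤ cnt (fun a => ∃ X ∈ P, arcEnters a X) B + ind (r ∈ P.biUnion id) := by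
  have hfree : (P.filter fun X => r ∉ X).card ≤ cnt (fun a => ∃ X ∈ P, arcEnters a X) B := by
    rw [← cnt_eq_card_filter]
    refine (card_le_card_of_forall_subsingleton (fun X a => arcEnters a X) (fun X hX => ?_)
      fun a _ X hX Y hY => ?_).trans (Multiset.toFinset_card_le _)
    · obtain ⟨hXP, hrX⟩ := mem_filter.mp hX
      obtain ⟨v, hv⟩ := hP.1 X hXP
      obtain ⟨a, haB, ha⟩ := (hB.2.2.2.2 v (mem_univ v)).exists_arcEnters hrX hv
      exact ⟨a, Multiset.mem_toFinset.mpr (Multiset.mem_filter.mpr ⟨haB, X, hXP, ha⟩), ha⟩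
    · exact hP.eq_of_mem_of_mem (mem_filter.mp hX.1).1 (mem_filter.mp hY.1).1 hX.2.1 hY.2.1
  have hsplit := card_filter_add_card_filter_not (s := P) (p := fun X => r ∈ X)
  have hroot := hP.card_filter_mem_le r
  omega

lemma card_le_eMixed_of_isOrientationOf [Fintype V] {Ed Eo Ar : Multiset (V × V)} {r : V}
    (hEo : IsOrientationOf Ed Eo) (hB : IsSpanningArbor (Eo + Ar) r)
    {P : Finset (Finset V)} (hP : IsSubpartition P) :
    P.card ≤ eMixed Ed Ar P + ind (r ∈ P.biUnion id) := by
  have harcs := hB.card_le hP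
  have hedges := hEo.cnt_arcEnters_le P
  rw [cnt_add] at harcs
  rw [eMixed_eq_cnt]
  omega

lemma subpartitionBound_of_packing [Fintype V] {S : Type*} [Fintype S] {π : S → V}
    {E A : Multiset (V × V)} {Ed Ar : S → Multiset (V × V)}
    (hEd : ∑ s, Ed s ≤ E) (hAr : ∑ s, Ar s ≤ A)
    (hpack : ∀ s, ∃ Eo, IsOrientationOf (Ed s) Eo ∧ IsSpanningArbor (Eo + Ar s) (π s)) :
    SubpartitionBound π E A := by
  intro P hP
  calc Fintype.card S * P.card = ∑ _s : S, P.card := by simp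
    _ ≤ ∑ s, (eMixed (Ed s) (Ar s) P + ind (π s ∈ P.biUnion id)) := sum_le_sum fun s _ => by
      obtain ⟨Eo, hEo, hB⟩ := hpack s
      exact card_le_eMixed_of_isOrientationOf hEo hB hP
    _ = eMixed (∑ s, Ed s) (∑ s, Ar s) P + rootCount π (P.biUnion id) := by
      rw [sum_add_distrib, eMixed_sum, rootCount_eq_sum]
    _ ≤ eMixed E A P + rootCount π (P.biUnion id) :=
      add_le_add_left (eMixed_mono hEd hAr P) _

end Necessity

section Splitting

variable {α σ : Type*}

lemma exists_split_of_le_add {B C D : Multiset α} (h : B ≤ C + D) :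
    ∃ Bc ≤ C, ∃ Bd ≤ D, B = Bc + Bd := by
  refine ⟨B ∩ C, Multiset.inter_le_right, B - B ∩ C, ?_, (add_tsub_cancel_of_le
    Multiset.inter_le_left).symm⟩
  rw [Multiset.le_iff_count]
  intro x
  have := Multiset.le_iff_count.mp h x
  rw [Multiset.count_sub, Multiset.count_inter]
  rw [Multiset.count_add] at this
  omega

lemma exists_split_of_sum_le_add (B : σ → Multiset α) (F : Finset σ) :
    ∀ {C D : Multiset α}, ∑ s ∈ F, B s ≤ C + D →
      ∃ Cs Ds : σ → Multiset α, (∀ s ∈ F, B s = Cs s + Ds s) ∧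
        ∑ s ∈ F, Cs s ≤ C ∧ ∑ s ∈ F, Ds s ≤ D := by
  induction F using Finset.induction_on with
  | empty => exact fun _ => ⟨0, 0, by simp, by simp, by simp⟩
  | @insert s₀ F hs₀ ih =>
    intro C D h
    rw [sum_insert hs₀] at h
    obtain ⟨Bc, hBc, Bd, hBd, hB⟩ := exists_split_of_le_add (le_of_add_le_left h)
    have hrest : ∑ s ∈ F, B s ≤ (C - Bc) + (D - Bd) := by
      rw [tsub_add_tsub_comm hBc hBd]
      exact le_tsub_of_add_le_left (hB ▸ h)
    obtain ⟨Cs, Ds, hsplit, hCs, hDs⟩ := ih hrest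
    refine ⟨Function.update Cs s₀ Bc, Function.update Ds s₀ Bd, fun s hs => ?_, ?_, ?_⟩
    · rcases mem_insert.mp hs with rfl | hsF
      · simpa using hB
      · have hne : s ≠ s₀ := by rintro rfl; exact hs₀ hsF
        simpa [hne] using hsplit s hsF
    · rw [sum_insert hs₀, Function.update_self, sum_update_of_notMem hs₀]
      exact (add_le_add_right hCs Bc).trans (add_tsub_cancel_of_le hBc).le
    · rw [sum_insert hs₀, Function.update_self, sum_update_of_notMem hs₀]
      exact (add_le_add_right hDs Bd).trans (add_tsub_cancel_of_le hBd).le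

lemma exists_rel_of_sum_le {β : Type*} {r : α → β → Prop}
    (Cs : σ → Multiset β) (F : Finset σ) :
    ∀ {E : Multiset α} {Eo : Multiset β}, Multiset.Rel r E Eo → ∑ s ∈ F, Cs s ≤ Eo →
      ∃ Ed : σ → Multiset α, (∀ s ∈ F, Multiset.Rel r (Ed s) (Cs s)) ∧ ∑ s ∈ F, Ed s ≤ E := by
  induction F using Finset.induction_on with
  | empty => exact fun _ _ => ⟨0, by simp, by simp⟩
  | @insert s₀ F hs₀ ih =>
    intro E Eo hrel h
    rw [sum_insert hs₀] at h
    rw [← add_tsub_cancel_of_le (le_of_add_le_left h)] at hrel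
    obtain ⟨E₀, E₁, hrel₀, hrel₁, rfl⟩ := Multiset.rel_add_right.mp hrel
    obtain ⟨Ed, hEd, hEdsum⟩ := ih hrel₁ (le_tsub_of_add_le_left h)
    refine ⟨Function.update Ed s₀ E₀, fun s hs => ?_, ?_⟩
    · rcases mem_insert.mp hs with rfl | hsF
      · simpa using hrel₀
      · have hne : s ≠ s₀ := by rintro rfl; exact hs₀ hsF
        simpa [hne] using hEd s hsF
    · rw [sum_insert hs₀, Function.update_self, sum_update_of_notMem hs₀]
      exact add_le_add_right hEdsum E₀

end Splitting

lemma subpartitionBound_iff {V S : Type*} [DecidableEq V] [Fintype S] (π : S → V)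
    (E A : Multiset (V × V)) :
    SubpartitionBound π E A ↔ ∀ P : Finset (Finset V), IsSubpartition P →
      (Fintype.card S : ℤ) * P.card - (univ.filter fun s => π s ∈ P.biUnion id).card
        ≤ (eMixed E A P : ℤ) := by
  refine forall₂_congr fun P _ => ?_
  have : (univ.filter fun s => π s ∈ P.biUnion id).card = rootCount π (P.biUnion id) := by
    rw [rootCount]
    congr
  omega

theorem frank_packing_spanning_mixed_arborescences_general
    (V : Type) [Fintype V] [DecidableEq V]
    (E A : Multiset (V × V))
    (S : Type) [Fintype S] (π : S → V) :
    (∃ Ed Ar : S → Multiset (V × V),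
        (∑ s : S, Ed s) ≤ E ∧ (∑ s : S, Ar s) ≤ A ∧
        ∀ s : S, ∃ Eo, IsOrientationOf (Ed s) Eo ∧
          IsSpanningArbor (Eo + Ar s) (π s)) ↔
    ∀ P : Finset (Finset V), IsSubpartition P →
      (Fintype.card S : ℤ) * P.card -
          (Finset.univ.filter fun s => π s ∈ P.biUnion id).card
        ≤ (eMixed E A P : ℤ) := by
  rw [← subpartitionBound_iff]
  refine ⟨fun ⟨Ed, Ar, hEd, hAr, hpack⟩ => subpartitionBound_of_packing hEd hAr hpack, fun h => ?_⟩
  obtain ⟨Eo, hEo, hbound⟩ := h.exists_orientation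
  obtain ⟨B, hB, harb⟩ := hbound.cutBound.exists_arborescence_packing
  obtain ⟨Cs, Ds, hsplit, hCs, hDs⟩ := exists_split_of_sum_le_add B univ hB
  obtain ⟨Ed, hEd, hEdE⟩ := exists_rel_of_sum_le Cs univ hEo hCs
  exact ⟨Ed, Ds, hEdE, hDs, fun s =>
    ⟨Cs s, hEd s (mem_univ s), hsplit s (mem_univ s) ▸ harb s⟩⟩

/-- **Frank's theorem on mixed graphs.** There is a packing of spanning mixed
`s`-arborescences in the mixed graph `F = (V, E ∪ A)`, one rooted at each element
`s` of the multiset `S`, iff `e_{E∪A}(𝒫) ≥ |S|·|𝒫| − |S_{∪𝒫}|` for every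
subpartition `𝒫` of `V`. -/
theorem frank_packing_spanning_mixed_arborescences
    (V : Type) [Fintype V] [DecidableEq V]
    (E A : Multiset (V × V)) (hE : ∀ e ∈ E, e.1 ≠ e.2) (hA : ∀ a ∈ A, a.1 ≠ a.2)
    (S : Type) [Fintype S] [DecidableEq S] (π : S → V) :
    (∃ Ed Ar : S → Multiset (V × V),
        (∑ s : S, Ed s) ≤ E ∧ (∑ s : S, Ar s) ≤ A ∧
        ∀ s : S, ∃ Eo, IsOrientationOf (Ed s) Eo ∧
          IsSpanningArbor (Eo + Ar s) (π s)) ↔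
    ∀ P : Finset (Finset V), IsSubpartition P →
      (Fintype.card S : ℤ) * P.card -
          (Finset.univ.filter fun s => π s ∈ P.biUnion id).card
        ≤ (eMixed E A P : ℤ) :=
  frank_packing_spanning_mixed_arborescences_general V E A S π

end ArborPaper
end
end

section
/- Let D=(V,A) be a digraph with strongly connected components C_1,…,C_k, let X ⊆ V, let J = {j : 1 ≤ j ≤ k, X∩C_j ≠ ∅}, and for each j ∈ J let X_j = (X∩C_j) ∪ ⋃{P_D^{C_i} : i ∈ J−{j}, C_i ⊆ P_D^{C_j}}. Then d_A^-(X) ≥ Σ_{j∈J} d_A^-(X_j). -/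
/- Common definitions for formalizing packing-of-arborescences theorems.

Conventions:
* A digraph on a finite vertex type `V` is given by a finite multiset of arcs
  `A : Multiset (V × V)`, an arc `(u, v)` having tail `u` and head `v`.
* An undirected (multi)graph is given by a multiset of edges `E : Multiset (V × V)`,
  an edge being recorded as an (arbitrarily ordered) pair of its endpoints.
* A multiset `S` of vertices (e.g. of roots) is given by a finite index type `S`
  together with a placement map `π : S → V`; the multiplicity of a vertex `v` is
  the size of the fiber over `v`.
* A dypergraph is given by a multiset `𝒜 : Multiset (Finset V × V)` of dyperedges
  `(Z, z)` with tail set `Z` and head `z`; a hypergraph by a multiset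
  `ℰ : Multiset (Finset V)` of hyperedges. -/

attribute [local instance] Classical.propDecidable

noncomputable section

/-! An arc entering `X_j` has its head in `X ∩ C_j`: the rest of `X_j` is a union of sets
`P_D^{C_i}`, and no arc enters such a set. Its tail lies outside `X`, for if it lay in a
component `C_i` meeting `X`, then `C_i ⊆ P_D^{C_j}` and the tail would lie in `X_j`. Nor does
the arc enter a second `X_{j'}`: its head would lie in `C_{j'}`, so `C_{j'} ⊆ P_D^{C_j}` and the
tail, lying in `P_D^{C_{j'}} ⊆ X_j`, would not be outside `X_j`. Hence the sets of arcs entering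
the `X_j` are pairwise disjoint subsets of the set of arcs entering `X`. -/

namespace Multiset

theorem card_filter_eq_sum_map_ite {α : Type*} (r : α → Prop) [DecidablePred r]
    (B : Multiset α) : (B.filter r).card = (B.map fun a => if r a then 1 else 0).sum := by
  induction B using Multiset.induction with
  | empty => simp
  | cons a B ih => by_cases h : r a <;> simp [h, ih, add_comm]

theorem sum_card_filter_le_card_filter {ι α : Type*} (S : Finset ι) (p : ι → α → Prop)
    [∀ j, DecidablePred (p j)] (q : α → Prop) [DecidablePred q] (B : Multiset α)
    (hpq : ∀ a ∈ B, ∀ j ∈ S, p j a → q a)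
    (hp : ∀ a ∈ B, ∀ i ∈ S, ∀ j ∈ S, p i a → p j a → i = j) :
    ∑ j ∈ S, (B.filter (p j)).card ≤ (B.filter q).card := by
  calc ∑ j ∈ S, (B.filter (p j)).card
      = (B.map fun a => (S.filter fun j => p j a).card).sum := by
        simp only [card_filter_eq_sum_map_ite, ← sum_map_sum, Finset.card_filter]
    _ ≤ (B.map fun a => if q a then 1 else 0).sum := by
        refine sum_map_le_sum_map _ _ fun a ha => ?_
        split_ifs with hq
        · exact Finset.card_le_one.mpr fun i hi j hj =>
            hp a ha i (Finset.mem_filter.mp hi).1 j (Finset.mem_filter.mp hj).1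
              (Finset.mem_filter.mp hi).2 (Finset.mem_filter.mp hj).2
        · rw [Nat.le_zero, Finset.card_eq_zero, Finset.filter_eq_empty_iff]
          exact fun j hj hpj => hq (hpq a ha j hj hpj)
    _ = (B.filter q).card := (card_filter_eq_sum_map_ite q B).symm

end Multiset

namespace ArborPaper

variable {V : Type*} {A : Multiset (V × V)} {a : V × V} {u w : V}

theorem reaches_of_mem (ha : a ∈ A) : Reaches A a.1 a.2 :=
  Relation.ReflTransGen.single ha

theorem IsSCCD.reaches [Fintype V] {C : Finset V} (hC : IsSCCD A C) (hu : u ∈ C) (hw : w ∈ C) :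
    Reaches A u w := by
  obtain ⟨v, rfl⟩ := hC
  simp only [Finset.mem_filter, Finset.mem_univ, true_and] at hu hw
  exact hu.1.trans hw.2

section PD

variable [Fintype V] {Y : Finset V}

theorem mem_PD : u ∈ PD A Y ↔ ∃ v ∈ Y, Reaches A u v := by
  simp [PD]

theorem subset_PD : Y ⊆ PD A Y :=
  fun v hv => mem_PD.mpr ⟨v, hv, .refl⟩

theorem mem_PD_of_reaches (huw : Reaches A u w) (hw : w ∈ PD A Y) : u ∈ PD A Y :=
  let ⟨v, hv, hwv⟩ := mem_PD.mp hw
  mem_PD.mpr ⟨v, hv, huw.trans hwv⟩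

theorem subset_PD_of_reaches {C : Finset V} (hC : ∀ u ∈ C, ∀ w ∈ C, Reaches A u w)
    (hu : u ∈ C) (hw : w ∈ Y) (huw : Reaches A u w) : C ⊆ PD A Y :=
  fun v hv => mem_PD.mpr ⟨w, hw, (hC v hv u hu).trans huw⟩

theorem head_mem_of_arcEnters_union_biUnion_PD [DecidableEq V] {ι : Type*} {S : Finset ι}
    {F : ι → Finset V} (ha : a ∈ A) (h : arcEnters a (Y ∪ S.biUnion fun i => PD A (F i))) :
    a.2 ∈ Y := by
  obtain ⟨hhead, htail⟩ := h
  rw [Finset.mem_union, Finset.mem_biUnion] at hhead htail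
  refine hhead.resolve_right fun ⟨i, hi, hmem⟩ => htail (Or.inr ⟨i, hi, ?_⟩)
  exact mem_PD_of_reaches (reaches_of_mem ha) hmem

end PD

section componentPart

variable [Fintype V] [DecidableEq V] {ι : Type*} [Fintype ι] [DecidableEq ι]
  (A) (C : ι → Finset V) (X : Finset V)

/-- The set `X_j` of the paper. -/
def componentPart (j : ι) : Finset V :=
  (X ∩ C j) ∪
    (Finset.univ.filter fun i =>
        (X ∩ C i).Nonempty ∧ i ≠ j ∧ C i ⊆ PD A (C j)).biUnion
      fun i => PD A (C i)

variable {A C X} {i j : ι}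

theorem PD_subset_componentPart (hi : (X ∩ C i).Nonempty) (hij : i ≠ j)
    (hsub : C i ⊆ PD A (C j)) : PD A (C i) ⊆ componentPart A C X j :=
  fun _ hv => Finset.mem_union_right _ <| Finset.mem_biUnion.mpr
    ⟨i, Finset.mem_filter.mpr ⟨Finset.mem_univ i, hi, hij, hsub⟩, hv⟩

theorem head_mem_of_arcEnters_componentPart (ha : a ∈ A)
    (h : arcEnters a (componentPart A C X j)) : a.2 ∈ X ∩ C j :=
  head_mem_of_arcEnters_union_biUnion_PD ha h

variable (hC : ∀ i, ∀ u ∈ C i, ∀ w ∈ C i, Reaches A u w)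
include hC

theorem arcEnters_of_arcEnters_componentPart (hcover : ∀ v, ∃ i, v ∈ C i) (ha : a ∈ A)
    (h : arcEnters a (componentPart A C X j)) : arcEnters a X := by
  obtain ⟨hheadX, hheadC⟩ := Finset.mem_inter.mp (head_mem_of_arcEnters_componentPart ha h)
  refine ⟨hheadX, fun htailX => ?_⟩
  obtain ⟨i, hi⟩ := hcover a.1
  have htail : a.1 ∈ X ∩ C i := Finset.mem_inter.mpr ⟨htailX, hi⟩
  obtain rfl | hij := eq_or_ne i j
  · exact h.2 (Finset.mem_union_left _ htail)
  · have hsub := subset_PD_of_reaches (hC i) hi hheadC (reaches_of_mem ha)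
    exact h.2 (PD_subset_componentPart ⟨a.1, htail⟩ hij hsub (subset_PD hi))

theorem eq_of_arcEnters_componentPart (ha : a ∈ A) (hi : (X ∩ C i).Nonempty)
    (h : arcEnters a (componentPart A C X j)) (h' : arcEnters a (componentPart A C X i)) :
    i = j := by
  by_contra hij
  have hheadj := (Finset.mem_inter.mp (head_mem_of_arcEnters_componentPart ha h)).2
  have hheadi := (Finset.mem_inter.mp (head_mem_of_arcEnters_componentPart ha h')).2
  have hsub := subset_PD_of_reaches (hC i) hheadi hheadj .refl
  exact h.2 (PD_subset_componentPart hi hij hsub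
    (mem_PD_of_reaches (reaches_of_mem ha) (subset_PD hheadi)))

theorem sum_inDeg_componentPart_le (hcover : ∀ v, ∃ i, v ∈ C i) :
    ∑ j ∈ Finset.univ.filter (fun j => (X ∩ C j).Nonempty), inDeg A (componentPart A C X j)
      ≤ inDeg A X :=
  Multiset.sum_card_filter_le_card_filter _ (fun j a => arcEnters a (componentPart A C X j)) _ A
    (fun _ ha _ _ h => arcEnters_of_arcEnters_componentPart hC hcover ha h)
    fun _ ha _ hi _ _ h h' =>
      eq_of_arcEnters_componentPart hC ha (Finset.mem_filter.mp hi).2 h' h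

end componentPart

theorem indeg_ge_sum_indeg_components_general
    (V : Type) [Fintype V] [DecidableEq V]
    (A : Multiset (V × V))
    (k : ℕ) (C : Fin k → Finset V)
    (hscc : ∀ j, IsSCCD A (C j))
    (hcover : ∀ v : V, ∃ j, v ∈ C j)
    (X : Finset V) :
    ∑ j ∈ Finset.univ.filter (fun j => (X ∩ C j).Nonempty),
        inDeg A ((X ∩ C j) ∪
          (Finset.univ.filter fun i =>
              (X ∩ C i).Nonempty ∧ i ≠ j ∧ C i ⊆ PD A (C j)).biUnion
            fun i => PD A (C i))
      ≤ inDeg A X :=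
  sum_inDeg_componentPart_le (A := A) (C := C) (X := X)
    (fun i _ hu _ hw => (hscc i).reaches hu hw) hcover

/-- Claim 1 of the paper: with `C 1, …, C k` the strongly connected components of
the digraph `D = (V, A)`, `X ⊆ V`, `J = {j : X ∩ C j ≠ ∅}` and
`X_j = (X ∩ C_j) ∪ ⋃ {P_D^{C_i} : i ∈ J − {j}, C_i ⊆ P_D^{C_j}}`, we have
`d⁻_A(X) ≥ Σ_{j ∈ J} d⁻_A(X_j)`. -/
theorem indeg_ge_sum_indeg_components
    (V : Type) [Fintype V] [DecidableEq V]
    (A : Multiset (V × V)) (hA : ∀ a ∈ A, a.1 ≠ a.2)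
    (k : ℕ) (C : Fin k → Finset V)
    (hscc : ∀ j, IsSCCD A (C j)) (hinj : Function.Injective C)
    (hcover : ∀ v : V, ∃ j, v ∈ C j)
    (X : Finset V) :
    ∑ j ∈ Finset.univ.filter (fun j => (X ∩ C j).Nonempty),
        inDeg A ((X ∩ C j) ∪
          (Finset.univ.filter fun i =>
              (X ∩ C i).Nonempty ∧ i ≠ j ∧ C i ⊆ PD A (C j)).biUnion
            fun i => PD A (C i))
      ≤ inDeg A X :=
  indeg_ge_sum_indeg_components_general V A k C hscc hcover X

end ArborPaper
end
end

section
/- Let D=(V,A) be a digraph with strongly connected components C_1,…,C_k, let S be a multiset of V and M=(S,r_M) a matroid on S. Let X ⊆ V, let J = {j : 1 ≤ j ≤ k, X∩C_j ≠ ∅}, and for each j ∈ J let X_j = (X∩C_j) ∪ ⋃{P_D^{C_i} : i ∈ J−{j}, C_i ⊆ P_D^{C_j}}. Then Σ_{j∈J} ( r_M(S_{P_D^{C_j}}) − r_M(S_{X_j}) ) ≥ r_M(S_{P_D^X}) − r_M(S_X). -/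
/- Common definitions for formalizing packing-of-arborescences theorems.

Conventions:
* A digraph on a finite vertex type `V` is given by a finite multiset of arcs
  `A : Multiset (V × V)`, an arc `(u, v)` having tail `u` and head `v`.
* An undirected (multi)graph is given by a multiset of edges `E : Multiset (V × V)`,
  an edge being recorded as an (arbitrarily ordered) pair of its endpoints.
* A multiset `S` of vertices (e.g. of roots) is given by a finite index type `S`
  together with a placement map `π : S → V`; the multiplicity of a vertex `v` is
  the size of the fiber over `v`.
* A dypergraph is given by a multiset `𝒜 : Multiset (Finset V × V)` of dyperedges
  `(Z, z)` with tail set `Z` and head `z`; a hypergraph by a multiset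
  `ℰ : Multiset (Finset V)` of hyperedges. -/

attribute [local instance] Classical.propDecidable

noncomputable section

namespace ArborPaper

variable {V : Type*} [Fintype V] [DecidableEq V]

section Claim2Helpers

variable {V : Type} [Fintype V] [DecidableEq V]

lemma mem_PD_iff {A : Multiset (V × V)} {X : Finset V} {u : V} :
    u ∈ PD A X ↔ ∃ v ∈ X, Reaches A u v := by
  simp [PD]

lemma subset_PD_s9 {A : Multiset (V × V)} {X : Finset V} : X ⊆ PD A X := by
  intro v hv
  exact mem_PD_iff.2 ⟨v, hv, Relation.ReflTransGen.refl⟩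

lemma PD_subset_PD {A : Multiset (V × V)} {Y Z : Finset V} (h : Y ⊆ PD A Z) :
    PD A Y ⊆ PD A Z := by
  intro u hu
  obtain ⟨v, hv, huv⟩ := mem_PD_iff.1 hu
  obtain ⟨w, hw, hvw⟩ := mem_PD_iff.1 (h hv)
  exact mem_PD_iff.2 ⟨w, hw, huv.trans hvw⟩

lemma scc_reaches {A : Multiset (V × V)} {Cj : Finset V} (h : IsSCCD A Cj)
    {v w : V} (hv : v ∈ Cj) (hw : w ∈ Cj) : Reaches A v w := by
  obtain ⟨r, hr⟩ := h
  rw [hr] at hv hw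
  simp only [Finset.mem_filter, Finset.mem_univ, true_and] at hv hw
  exact hv.1.trans hw.2

lemma scc_nonempty {A : Multiset (V × V)} {Cj : Finset V} (h : IsSCCD A Cj) :
    Cj.Nonempty := by
  obtain ⟨r, hr⟩ := h
  refine ⟨r, ?_⟩
  rw [hr]
  simp only [Finset.mem_filter, Finset.mem_univ, true_and]
  exact ⟨Relation.ReflTransGen.refl, Relation.ReflTransGen.refl⟩

lemma scc_antisymm {A : Multiset (V × V)} {Ci Cj : Finset V}
    (hi : IsSCCD A Ci) (hj : IsSCCD A Cj)
    (h1 : Ci ⊆ PD A Cj) (h2 : Cj ⊆ PD A Ci) : Ci = Cj := by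
  obtain ⟨u, hu⟩ := scc_nonempty hi
  obtain ⟨v, hv, huv⟩ := mem_PD_iff.1 (h1 hu)
  obtain ⟨w, hw, hvw⟩ := mem_PD_iff.1 (h2 hv)
  have hwu : Reaches A w u := scc_reaches hi hw hu
  have hvu : Reaches A v u := hvw.trans hwu
  -- u and v are mutually reachable
  obtain ⟨ri, hri⟩ := hi
  obtain ⟨rj, hrj⟩ := hj
  have hu' : Reaches A u ri ∧ Reaches A ri u := by
    have := hu; rw [hri] at this
    simpa using this
  have hv' : Reaches A v rj ∧ Reaches A rj v := by
    have := hv; rw [hrj] at this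
    simpa using this
  have hij : Reaches A ri rj := hu'.2.trans (huv.trans hv'.1)
  have hji : Reaches A rj ri := hv'.2.trans (hvu.trans hu'.1)
  rw [hri, hrj]
  ext x
  simp only [Finset.mem_filter, Finset.mem_univ, true_and]
  constructor
  · rintro ⟨a, b⟩; exact ⟨a.trans hij, hji.trans b⟩
  · rintro ⟨a, b⟩; exact ⟨a.trans hji, hij.trans b⟩

end Claim2Helpers

/-- Claim 2 of the paper: with `C 1, …, C k` the strongly connected components of
the digraph `D = (V, A)`, `S` a multiset of `V`, `M` a matroid on `S`, `X ⊆ V`,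
`J = {j : X ∩ C j ≠ ∅}` and
`X_j = (X ∩ C_j) ∪ ⋃ {P_D^{C_i} : i ∈ J − {j}, C_i ⊆ P_D^{C_j}}`, we have
`Σ_{j ∈ J} (r_M(S_{P_D^{C_j}}) − r_M(S_{X_j})) ≥ r_M(S_{P_D^X}) − r_M(S_X)`. -/
theorem rank_sum_components_ge
    (V : Type) [Fintype V] [DecidableEq V]
    (A : Multiset (V × V)) (hA : ∀ a ∈ A, a.1 ≠ a.2)
    (S : Type) [Fintype S] [DecidableEq S] (π : S → V) (M : RankFn S)
    (k : ℕ) (C : Fin k → Finset V)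
    (hscc : ∀ j, IsSCCD A (C j)) (hinj : Function.Injective C)
    (hcover : ∀ v : V, ∃ j, v ∈ C j)
    (X : Finset V) :
    (M.r (Finset.univ.filter fun s => π s ∈ PD A X) : ℤ) -
        M.r (Finset.univ.filter fun s => π s ∈ X)
      ≤ ∑ j ∈ Finset.univ.filter (fun j => (X ∩ C j).Nonempty),
          ((M.r (Finset.univ.filter fun s => π s ∈ PD A (C j)) : ℤ) -
            M.r (Finset.univ.filter fun s => π s ∈
              ((X ∩ C j) ∪
                (Finset.univ.filter fun i =>
                    (X ∩ C i).Nonempty ∧ i ≠ j ∧ C i ⊆ PD A (C j)).biUnion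
                  fun i => PD A (C i)))) := by
  classical
  set J : Finset (Fin k) := Finset.univ.filter (fun j => (X ∩ C j).Nonempty) with hJ
  set P : Fin k → Finset V := fun j => PD A (C j) with hP
  set Xs : Fin k → Finset V := fun j =>
    (X ∩ C j) ∪
      (Finset.univ.filter fun i =>
          (X ∩ C i).Nonempty ∧ i ≠ j ∧ C i ⊆ PD A (C j)).biUnion
        fun i => PD A (C i) with hXs
  set g : Finset V → ℤ := fun Y => (M.r (Finset.univ.filter fun s => π s ∈ Y) : ℤ)
    with hg
  have gmono : ∀ {Y Z : Finset V}, Y ⊆ Z → g Y ≤ g Z := by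
    intro Y Z h
    have hsub : (Finset.univ.filter fun s => π s ∈ Y) ⊆
        (Finset.univ.filter fun s => π s ∈ Z) := by
      intro s hs
      simp only [Finset.mem_filter] at hs ⊢
      exact ⟨hs.1, h hs.2⟩
    simp only [hg]
    exact_mod_cast M.mono hsub
  have gsub : ∀ Y Z : Finset V, g (Y ∪ Z) + g (Y ∩ Z) ≤ g Y + g Z := by
    intro Y Z
    have h1 : (Finset.univ.filter fun s => π s ∈ Y ∪ Z) =
        (Finset.univ.filter fun s => π s ∈ Y) ∪ (Finset.univ.filter fun s => π s ∈ Z) := by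
      ext s; simp [Finset.mem_union, and_or_left]
    have h2 : (Finset.univ.filter fun s => π s ∈ Y ∩ Z) =
        (Finset.univ.filter fun s => π s ∈ Y) ∩ (Finset.univ.filter fun s => π s ∈ Z) := by
      ext s; simp [Finset.mem_inter, and_and_left]
    have := M.submodular (Finset.univ.filter fun s => π s ∈ Y)
      (Finset.univ.filter fun s => π s ∈ Z)
    rw [hg]; push_cast; rw [h1, h2]; exact_mod_cast this
  -- Xs j ⊆ P j for j ∈ J
  have hXsP : ∀ j, Xs j ⊆ P j := by
    intro j
    apply Finset.union_subset
    · exact (Finset.inter_subset_right).trans subset_PD_s9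
    · apply Finset.biUnion_subset.2
      intro i hi
      simp only [Finset.mem_filter, Finset.mem_univ, true_and] at hi
      exact PD_subset_PD hi.2.2
  -- the key telescoping induction
  have key : ∀ n : ℕ, ∀ T : Finset (Fin k), T.card ≤ n → T ⊆ J →
      ∀ acc : Finset V, X ⊆ acc → (∀ i ∈ J, i ∉ T → P i ⊆ acc) →
      g (acc ∪ T.biUnion P) - g acc ≤ ∑ j ∈ T, (g (P j) - g (Xs j)) := by
    intro n
    induction n with
    | zero =>
      intro T hcard _ acc _ _
      rw [Finset.card_eq_zero.1 (Nat.le_zero.1 hcard)]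
      simp
    | succ n ih =>
      intro T hcard hTJ acc hXacc hrest
      rcases T.eq_empty_or_nonempty with rfl | hTne
      · simp
      obtain ⟨j, hjT, hjmin⟩ := T.exists_min_image (fun j => (P j).card) hTne
      have hXsj : Xs j ⊆ acc ∩ P j := by
        apply Finset.subset_inter _ (hXsP j)
        apply Finset.union_subset
        · exact (Finset.inter_subset_left).trans hXacc
        · apply Finset.biUnion_subset.2
          intro i hi
          simp only [Finset.mem_filter, Finset.mem_univ, true_and] at hi
          have hiJ : i ∈ J := by simp [hJ, hi.1]
          have hiT : i ∉ T := by
            intro hiT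
            have hPij : P i ⊆ P j := PD_subset_PD hi.2.2
            have hne : P i ≠ P j := by
              intro heq
              have hCjPi : C j ⊆ P i := by
                rw [heq]; exact subset_PD_s9
              exact hi.2.1 (hinj (scc_antisymm (hscc i) (hscc j) hi.2.2 hCjPi))
            exact absurd (hjmin i hiT) (not_le.2 (Finset.card_lt_card
              (ssubset_of_subset_of_ne hPij hne)))
          exact hrest i hiJ hiT
      have step : g (acc ∪ P j) - g acc ≤ g (P j) - g (Xs j) := by
        have := gsub acc (P j)
        have := gmono hXsj
        linarith
      have hT' : T.erase j ⊆ J := (Finset.erase_subset _ _).trans hTJ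
      have hrest' : ∀ i ∈ J, i ∉ T.erase j → P i ⊆ acc ∪ P j := by
        intro i hiJ hi
        by_cases hij : i = j
        · subst hij; exact Finset.subset_union_right
        · have : i ∉ T := fun h => hi (Finset.mem_erase.2 ⟨hij, h⟩)
          exact (hrest i hiJ this).trans Finset.subset_union_left
      have hcard' : (T.erase j).card ≤ n := by
        have := Finset.card_erase_of_mem hjT
        omega
      have ihh := ih (T.erase j) hcard' hT' (acc ∪ P j)
        (hXacc.trans Finset.subset_union_left) hrest'
      have hun : (acc ∪ P j) ∪ (T.erase j).biUnion P = acc ∪ T.biUnion P := by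
        conv_rhs => rw [← Finset.insert_erase hjT]
        rw [Finset.biUnion_insert]
        ext x
        simp only [Finset.mem_union]
        tauto
      rw [hun] at ihh
      have hsum : ∑ x ∈ T, (g (P x) - g (Xs x)) =
          (g (P j) - g (Xs j)) + ∑ x ∈ T.erase j, (g (P x) - g (Xs x)) :=
        (Finset.add_sum_erase _ _ hjT).symm
      rw [hsum]
      linarith
  have hfinal := key J.card J le_rfl (Finset.Subset.refl J) X (Finset.Subset.refl X)
    (fun i hi hni => absurd hi hni)
  -- X ∪ biUnion = PD A X
  have hPDX : X ∪ J.biUnion P = PD A X := by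
    apply Finset.Subset.antisymm
    · apply Finset.union_subset subset_PD_s9
      apply Finset.biUnion_subset.2
      intro j hj
      simp only [hJ, Finset.mem_filter, Finset.mem_univ, true_and] at hj
      obtain ⟨x, hx⟩ := hj
      simp only [Finset.mem_inter] at hx
      intro u hu
      obtain ⟨v, hv, huv⟩ := mem_PD_iff.1 hu
      exact mem_PD_iff.2 ⟨x, hx.1, huv.trans (scc_reaches (hscc j) hv hx.2)⟩
    · intro u hu
      obtain ⟨x, hx, hux⟩ := mem_PD_iff.1 hu
      obtain ⟨j, hj⟩ := hcover x
      have hjJ : j ∈ J := by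
        simp only [hJ, Finset.mem_filter, Finset.mem_univ, true_and]
        exact ⟨x, Finset.mem_inter.2 ⟨hx, hj⟩⟩
      apply Finset.mem_union_right
      exact Finset.mem_biUnion.2 ⟨j, hjJ, mem_PD_iff.2 ⟨x, hj, hux⟩⟩
  rw [hPDX] at hfinal
  exact hfinal


end ArborPaper
end
end
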